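/- arXiv:2603.10138 — 5 statements merged into one kernel-verified Lean document; each statement's English description precedes it below -/
import Mathlib

section
/- Assume the operating point satisfies y_k = g(u_k), let S_k denote the Fréchet derivative (Jacobian) of g at u_k, and assume the second-order Taylor bound ‖g(u_k + v) − g(u_k) − S_k v‖ ≤ β ‖v‖² holds for all v ∈ ℝⁿ, where β ≥ 0. Then for every step d = (d_y, d_u) ∈ ℝⁿ × ℝⁿ, |J(y_k + d_y, u_k + d_u) − L^{S_k}(d_y, d_u)| ≤ β ‖λ‖ ‖d_u‖². -/
open scoped BigOperators

/-- The penalized objective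
`J(y,u) = c_v(y) + c_u(u) + ∑ᵢ λᵢ|yᵢ − g(u)ᵢ| + ∑ⱼ ηⱼ max(hⱼ(y,u),0)`. -/
noncomputable def Jpen {n p : ℕ}
    (cv cu : EuclideanSpace ℝ (Fin n) → ℝ)
    (h : EuclideanSpace ℝ (Fin n) → EuclideanSpace ℝ (Fin n) → EuclideanSpace ℝ (Fin p))
    (g : EuclideanSpace ℝ (Fin n) → EuclideanSpace ℝ (Fin n))
    (lam : EuclideanSpace ℝ (Fin n)) (eta : EuclideanSpace ℝ (Fin p))
    (y u : EuclideanSpace ℝ (Fin n)) : ℝ :=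
  cv y + cu u + ∑ i, lam i * |y i - g u i| + ∑ j, eta j * max (h y u j) 0

/-- The linearized penalized model at the operating point `(y_k,u_k)` built from a matrix `M`:
`L^M(d_y,d_u) = c_v(y_k+d_y) + c_u(u_k+d_u) + ∑ᵢ λᵢ|(d_y − M d_u)ᵢ| + ∑ⱼ ηⱼ max(hⱼ(y_k+d_y,u_k+d_u),0)`. -/
noncomputable def Lmod {n p : ℕ}
    (cv cu : EuclideanSpace ℝ (Fin n) → ℝ)
    (h : EuclideanSpace ℝ (Fin n) → EuclideanSpace ℝ (Fin n) → EuclideanSpace ℝ (Fin p))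
    (lam : EuclideanSpace ℝ (Fin n)) (eta : EuclideanSpace ℝ (Fin p))
    (yk uk : EuclideanSpace ℝ (Fin n))
    (M : Matrix (Fin n) (Fin n) ℝ)
    (dy du : EuclideanSpace ℝ (Fin n)) : ℝ :=
  cv (yk + dy) + cu (uk + du) + ∑ i, lam i * |dy i - M.mulVec du i|
    + ∑ j, eta j * max (h (yk + dy) (uk + du) j) 0

/-- if `y_k = g(u_k)`, `S_k` is the Jacobian of `g` at `u_k` and the
second-order Taylor bound holds, then `|J(z_k + d) − L^{S_k}(d)| ≤ β‖λ‖‖d_u‖²`. -/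
theorem abs_Jpen_sub_Lmod_le
    {n p : ℕ}
    (cv cu : EuclideanSpace ℝ (Fin n) → ℝ)
    (h : EuclideanSpace ℝ (Fin n) → EuclideanSpace ℝ (Fin n) → EuclideanSpace ℝ (Fin p))
    (g : EuclideanSpace ℝ (Fin n) → EuclideanSpace ℝ (Fin n))
    (lam : EuclideanSpace ℝ (Fin n)) (eta : EuclideanSpace ℝ (Fin p))
    (hlam : ∀ i, 0 ≤ lam i) (heta : ∀ j, 0 ≤ eta j)
    (yk uk : EuclideanSpace ℝ (Fin n))
    (hyk : yk = g uk)
    (Sk : Matrix (Fin n) (Fin n) ℝ)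
    (hSk : HasFDerivAt g (Matrix.toEuclideanCLM (𝕜 := ℝ) Sk) uk)
    (β : ℝ) (hβ : 0 ≤ β)
    (htaylor : ∀ v : EuclideanSpace ℝ (Fin n),
      ‖g (uk + v) - g uk - Matrix.toEuclideanCLM (𝕜 := ℝ) Sk v‖ ≤ β * ‖v‖ ^ 2) :
    ∀ dy du : EuclideanSpace ℝ (Fin n),
      |Jpen cv cu h g lam eta (yk + dy) (uk + du) - Lmod cv cu h lam eta yk uk Sk dy du|
        ≤ β * ‖lam‖ * ‖du‖ ^ 2 := by
  intro dy du
  set e : EuclideanSpace ℝ (Fin n) :=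
    g (uk + du) - g uk - Matrix.toEuclideanCLM (𝕜 := ℝ) Sk du with he
  have happ : ∀ i, Sk.mulVec du i = (Matrix.toEuclideanCLM (𝕜 := ℝ) Sk du) i := fun i => rfl
  have hdiff : Jpen cv cu h g lam eta (yk + dy) (uk + du) - Lmod cv cu h lam eta yk uk Sk dy du
      = ∑ i, lam i * (|(yk + dy) i - g (uk + du) i| - |dy i - Sk.mulVec du i|) := by
    simp only [Jpen, Lmod, mul_sub, Finset.sum_sub_distrib]
    ring
  rw [hdiff]
  set absE : EuclideanSpace ℝ (Fin n) := (WithLp.equiv _ _).symm (fun i => |e i|) with habsE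
  have step1 : |∑ i, lam i * (|(yk + dy) i - g (uk + du) i| - |dy i - Sk.mulVec du i|)|
      ≤ ∑ i, lam i * absE i := by
    refine (Finset.abs_sum_le_sum_abs _ _).trans (Finset.sum_le_sum fun i _ => ?_)
    rw [abs_mul, abs_of_nonneg (hlam i)]
    have habs : |(|(yk + dy) i - g (uk + du) i| - |dy i - Sk.mulVec du i|)| ≤ absE i := by
      refine (abs_abs_sub_abs_le_abs_sub _ _).trans (le_of_eq ?_)
      have : (yk + dy) i - g (uk + du) i - (dy i - Sk.mulVec du i) = -(e i) := by
        rw [he, happ i, hyk]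
        simp only [PiLp.sub_apply, PiLp.add_apply]
        ring
      rw [this, abs_neg]
      rfl
    exact mul_le_mul_of_nonneg_left habs (hlam i)
  have hnormabsE : ‖absE‖ = ‖e‖ := by
    simp [habsE, EuclideanSpace.norm_eq, Real.norm_eq_abs, abs_abs]
  have step2 : ∑ i, lam i * absE i ≤ ‖lam‖ * ‖e‖ := by
    have := real_inner_le_norm lam absE
    rw [PiLp.inner_apply] at this
    simpa [RCLike.inner_apply, hnormabsE, mul_comm] using this
  have step3 : ‖e‖ ≤ β * ‖du‖ ^ 2 := htaylor du
  calc |∑ i, lam i * (|(yk + dy) i - g (uk + du) i| - |dy i - Sk.mulVec du i|)|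
      ≤ ∑ i, lam i * absE i := step1
    _ ≤ ‖lam‖ * ‖e‖ := step2
    _ ≤ ‖lam‖ * (β * ‖du‖ ^ 2) := by
        exact mul_le_mul_of_nonneg_left step3 (norm_nonneg _)
    _ = β * ‖lam‖ * ‖du‖ ^ 2 := by ring
end

section
/- Assume the operating point satisfies y_k = g(u_k), let S_k denote the Fréchet derivative (Jacobian) of g at u_k, assume the second-order Taylor bound ‖g(u_k + v) − g(u_k) − S_k v‖ ≤ β ‖v‖² holds for all v ∈ ℝⁿ with β ≥ 0, and let S̃_k ∈ ℝ^{n×n} be any matrix. Then for every step d = (d_y, d_u) ∈ ℝⁿ × ℝⁿ, |J(y_k + d_y, u_k + d_u) − L^{S̃_k}(d_y, d_u)| ≤ β ‖λ‖ ‖d_u‖² + ‖λ‖ · ‖(S̃_k − S_k) d_u‖. -/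
open scoped BigOperators

/-- if `y_k = g(u_k)`, `S_k` is the Jacobian of `g` at `u_k`, the second-order
Taylor bound holds and `S̃_k` is any matrix, then for every step `d = (d_y,d_u)`,
`|J(z_k + d) − L^{S̃_k}(d)| ≤ β‖λ‖‖d_u‖² + ‖λ‖‖(S̃_k − S_k) d_u‖`. -/
theorem abs_Jpen_sub_Lmod_est_le
    {n p : ℕ}
    (cv cu : EuclideanSpace ℝ (Fin n) → ℝ)
    (h : EuclideanSpace ℝ (Fin n) → EuclideanSpace ℝ (Fin n) → EuclideanSpace ℝ (Fin p))
    (g : EuclideanSpace ℝ (Fin n) → EuclideanSpace ℝ (Fin n))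
    (lam : EuclideanSpace ℝ (Fin n)) (eta : EuclideanSpace ℝ (Fin p))
    (hlam : ∀ i, 0 ≤ lam i) (heta : ∀ j, 0 ≤ eta j)
    (yk uk : EuclideanSpace ℝ (Fin n))
    (hyk : yk = g uk)
    (Sk : Matrix (Fin n) (Fin n) ℝ)
    (hSk : HasFDerivAt g (Matrix.toEuclideanCLM (𝕜 := ℝ) Sk) uk)
    (β : ℝ) (hβ : 0 ≤ β)
    (htaylor : ∀ v : EuclideanSpace ℝ (Fin n),
      ‖g (uk + v) - g uk - Matrix.toEuclideanCLM (𝕜 := ℝ) Sk v‖ ≤ β * ‖v‖ ^ 2)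
    (Stilde : Matrix (Fin n) (Fin n) ℝ) :
    ∀ dy du : EuclideanSpace ℝ (Fin n),
      |Jpen cv cu h g lam eta (yk + dy) (uk + du) - Lmod cv cu h lam eta yk uk Stilde dy du|
        ≤ β * ‖lam‖ * ‖du‖ ^ 2 + ‖lam‖ * ‖Matrix.toEuclideanLin (Stilde - Sk) du‖ := by
  intro dy du
  classical
  -- the error vector
  set F : EuclideanSpace ℝ (Fin n) :=
    g (uk + du) - g uk - Matrix.toEuclideanLin Stilde du with hF
  have hFi : ∀ i, F i = g (uk + du) i - g uk i - Stilde.mulVec du i := by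
    intro i; rfl
  -- the difference of objectives
  have hdiff : Jpen cv cu h g lam eta (yk + dy) (uk + du)
      - Lmod cv cu h lam eta yk uk Stilde dy du
      = ∑ i, lam i * (|(yk + dy) i - g (uk + du) i| - |dy i - Stilde.mulVec du i|) := by
    simp [Jpen, Lmod, mul_sub, Finset.sum_sub_distrib]
  have hstep : ∀ i, |(|(yk + dy) i - g (uk + du) i| - |dy i - Stilde.mulVec du i|)|
      ≤ |F i| := by
    intro i
    have h1 : (yk + dy) i - g (uk + du) i - (dy i - Stilde.mulVec du i) = -(F i) := by
      have : (yk + dy) i = yk i + dy i := rfl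
      rw [this, hFi i, hyk]
      ring
    calc |(|(yk + dy) i - g (uk + du) i| - |dy i - Stilde.mulVec du i|)|
        ≤ |(yk + dy) i - g (uk + du) i - (dy i - Stilde.mulVec du i)| :=
          abs_abs_sub_abs_le_abs_sub _ _
      _ = |F i| := by rw [h1, abs_neg]
  -- Cauchy–Schwarz
  set G : EuclideanSpace ℝ (Fin n) := WithLp.toLp 2 (fun i => |F i|) with hG
  have hCS : ∑ i, lam i * |F i| ≤ ‖lam‖ * ‖F‖ := by
    have h2 := real_inner_le_norm lam G
    have hnorm : ‖G‖ = ‖F‖ := by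
      simp [EuclideanSpace.norm_eq, hG, Real.norm_eq_abs, abs_abs]
    rw [hnorm] at h2
    simpa [PiLp.inner_apply, hG, mul_comm] using h2
  -- bound ‖F‖
  have hFnorm : ‖F‖ ≤ β * ‖du‖ ^ 2 + ‖Matrix.toEuclideanLin (Stilde - Sk) du‖ := by
    have hdecomp : F = (g (uk + du) - g uk - Matrix.toEuclideanCLM (𝕜 := ℝ) Sk du)
        - Matrix.toEuclideanLin (Stilde - Sk) du := by
      rw [hF]
      have : Matrix.toEuclideanLin (Stilde - Sk) du
          = Matrix.toEuclideanLin Stilde du - Matrix.toEuclideanCLM (𝕜 := ℝ) Sk du := by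
        have h3 : (Matrix.toEuclideanCLM (𝕜 := ℝ) Sk) du = Matrix.toEuclideanLin Sk du := by
          rw [← Matrix.coe_toEuclideanCLM_eq_toEuclideanLin]; rfl
        rw [h3, map_sub]; rfl
      rw [this]; abel
    calc ‖F‖ ≤ ‖g (uk + du) - g uk - Matrix.toEuclideanCLM (𝕜 := ℝ) Sk du‖
          + ‖Matrix.toEuclideanLin (Stilde - Sk) du‖ := by
          rw [hdecomp]; exact norm_sub_le _ _
      _ ≤ β * ‖du‖ ^ 2 + ‖Matrix.toEuclideanLin (Stilde - Sk) du‖ := by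
          gcongr; exact htaylor du
  -- combine
  rw [hdiff]
  calc |∑ i, lam i * (|(yk + dy) i - g (uk + du) i| - |dy i - Stilde.mulVec du i|)|
      ≤ ∑ i, |lam i * (|(yk + dy) i - g (uk + du) i| - |dy i - Stilde.mulVec du i|)| :=
        Finset.abs_sum_le_sum_abs _ _
    _ ≤ ∑ i, lam i * |F i| := by
        apply Finset.sum_le_sum
        intro i _
        rw [abs_mul, abs_of_nonneg (hlam i)]
        exact mul_le_mul_of_nonneg_left (hstep i) (hlam i)
    _ ≤ ‖lam‖ * ‖F‖ := hCS
    _ ≤ ‖lam‖ * (β * ‖du‖ ^ 2 + ‖Matrix.toEuclideanLin (Stilde - Sk) du‖) := by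
        exact mul_le_mul_of_nonneg_left hFnorm (norm_nonneg _)
    _ = β * ‖lam‖ * ‖du‖ ^ 2 + ‖lam‖ * ‖Matrix.toEuclideanLin (Stilde - Sk) du‖ := by ring
end

section
/- Let r > 0, let U ∈ ℝ^{τ×n} have every row of Euclidean norm at most u_max and satisfy ‖Ux‖ ≥ μ‖x‖ for all x ∈ ℝⁿ with μ > 0, let W ∈ ℝ^{τ×τ} be diagonal with diagonal entries in [w_min, 1] for some w_min > 0, and let E ∈ ℝ^{τ×n} have every row of Euclidean norm at most e_max. Given S ∈ ℝ^{n×n}, set Y := U Sᵀ + E and define the weighted least-squares estimate S̃ by S̃ᵀ := (UᵀWU)^{-1} Uᵀ W Y. Then the Euclidean operator norm of S̃ − S satisfies ‖S̃ − S‖ ≤ τ · u_max · e_max / (w_min μ²). -/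
/-- Reinterpret a finitely-indexed family of reals as a vector of Euclidean space. -/
def toEuc {n : ℕ} (x : Fin n → ℝ) : EuclideanSpace ℝ (Fin n) := WithLp.toLp 2 x

open Matrix in
lemma norm_toEuclideanCLM_transpose {n : ℕ} (M : Matrix (Fin n) (Fin n) ℝ) :
    ‖Matrix.toEuclideanCLM (𝕜 := ℝ) M‖ = ‖Matrix.toEuclideanCLM (𝕜 := ℝ) M.transpose‖ := by
  rw [show M.transpose = star M by ext i j; simp [Matrix.conjTranspose_apply], map_star,
    ContinuousLinearMap.star_eq_adjoint]
  exact (ContinuousLinearMap.adjoint.norm_map _).symm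

lemma toEuc_norm_sq {m : ℕ} (x : Fin m → ℝ) : ‖toEuc x‖ ^ 2 = ∑ i, x i ^ 2 := by
  rw [EuclideanSpace.norm_eq,
    Real.sq_sqrt (by positivity)]
  simp [toEuc, sq_abs]

open Matrix in
lemma dot_eq_inner_toEuc {m : ℕ} (x y : Fin m → ℝ) :
    x ⬝ᵥ y = (inner ℝ (toEuc x) (toEuc y) : ℝ) := by
  simp [toEuc, PiLp.inner_apply, dotProduct, RCLike.inner_apply, mul_comm]

open Matrix in
lemma abs_dot_le {m : ℕ} (x y : Fin m → ℝ) : |x ⬝ᵥ y| ≤ ‖toEuc x‖ * ‖toEuc y‖ := by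
  rw [dot_eq_inner_toEuc]
  exact abs_real_inner_le_norm _ _

/-- for `Y := U Sᵀ + E` and the weighted least-squares estimate
`S̃ᵀ := (UᵀWU)⁻¹UᵀWY`, assuming every row of `U` has Euclidean norm `≤ u_max`,
`‖Ux‖ ≥ μ‖x‖` for all `x` (with `μ > 0`), `W` diagonal with entries in `[w_min, 1]`
(`w_min > 0`) and every row of `E` of Euclidean norm `≤ e_max`, the Euclidean operator
norm of `S̃ − S` is at most `τ u_max e_max / (w_min μ²)`. -/
theorem wls_estimate_error_bound
    {τ n : ℕ}
    (r : ℝ) (hr : 0 < r)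
    (U : Matrix (Fin τ) (Fin n) ℝ)
    (umax : ℝ) (hU_rows : ∀ ℓ : Fin τ, ‖toEuc (U ℓ)‖ ≤ umax)
    (μ : ℝ) (hμ : 0 < μ)
    (hexc : ∀ x : EuclideanSpace ℝ (Fin n), μ * ‖x‖ ≤ ‖Matrix.toEuclideanLin U x‖)
    (w : Fin τ → ℝ) (wmin : ℝ) (hwmin : 0 < wmin)
    (hw : ∀ ℓ, w ℓ ∈ Set.Icc wmin 1)
    (W : Matrix (Fin τ) (Fin τ) ℝ) (hW : W = Matrix.diagonal w)
    (E : Matrix (Fin τ) (Fin n) ℝ)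
    (emax : ℝ) (hE_rows : ∀ ℓ : Fin τ, ‖toEuc (E ℓ)‖ ≤ emax)
    (S : Matrix (Fin n) (Fin n) ℝ)
    (Y : Matrix (Fin τ) (Fin n) ℝ) (hY : Y = U * S.transpose + E)
    (Stilde : Matrix (Fin n) (Fin n) ℝ)
    (hStilde : Stilde.transpose = (U.transpose * W * U)⁻¹ * U.transpose * W * Y) :
    ‖Matrix.toEuclideanCLM (𝕜 := ℝ) (Stilde - S)‖
      ≤ τ * umax * emax / (wmin * μ ^ 2) := by
  classical
  open Matrix in
  have hc : (0:ℝ) < wmin * μ ^ 2 := by positivity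
  set A := U.transpose * W * U with hA
  -- quadratic form lower bound
  have quad : ∀ x : Fin n → ℝ, wmin * μ ^ 2 * ‖toEuc x‖ ^ 2 ≤ x ⬝ᵥ (A *ᵥ x) := by
    intro x
    have h1 : x ⬝ᵥ (A *ᵥ x) = (U *ᵥ x) ⬝ᵥ (W *ᵥ (U *ᵥ x)) := by
      rw [hA, ← Matrix.mulVec_mulVec, ← Matrix.mulVec_mulVec,
        Matrix.dotProduct_mulVec, Matrix.vecMul_transpose]
    have h2 : (U *ᵥ x) ⬝ᵥ (W *ᵥ (U *ᵥ x)) = ∑ ℓ, w ℓ * ((U *ᵥ x) ℓ) ^ 2 := by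
      simp [hW, dotProduct, Matrix.mulVec_diagonal]
      exact Finset.sum_congr rfl fun ℓ _ => by ring
    have h3 : wmin * ‖toEuc (U *ᵥ x)‖ ^ 2 ≤ ∑ ℓ, w ℓ * ((U *ᵥ x) ℓ) ^ 2 := by
      rw [toEuc_norm_sq, Finset.mul_sum]
      exact Finset.sum_le_sum fun ℓ _ =>
        mul_le_mul_of_nonneg_right (hw ℓ).1 (sq_nonneg _)
    have h4 : μ * ‖toEuc x‖ ≤ ‖toEuc (U *ᵥ x)‖ := by
      simpa [toEuc, Matrix.toEuclideanLin_apply_piLp_toLp] using hexc (toEuc x)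
    have h5 : μ ^ 2 * ‖toEuc x‖ ^ 2 ≤ ‖toEuc (U *ᵥ x)‖ ^ 2 := by
      rw [← mul_pow]
      exact pow_le_pow_left₀ (by positivity) h4 2
    rw [h1, h2]
    calc wmin * μ ^ 2 * ‖toEuc x‖ ^ 2 = wmin * (μ ^ 2 * ‖toEuc x‖ ^ 2) := by ring
      _ ≤ wmin * ‖toEuc (U *ᵥ x)‖ ^ 2 := by
          exact mul_le_mul_of_nonneg_left h5 hwmin.le
      _ ≤ _ := h3
  -- A is positive definite
  have hApos : A.PosDef := by
    rw [Matrix.posDef_iff_dotProduct_mulVec]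
    constructor
    · show Aᴴ = A
      have hct : Aᴴ = Aᵀ := by ext i j; simp [Matrix.conjTranspose_apply]
      rw [hct, hA, Matrix.transpose_mul, Matrix.transpose_mul, Matrix.transpose_transpose,
        hW, Matrix.diagonal_transpose, Matrix.mul_assoc]
    · intro x hx
      have hx' : toEuc x ≠ 0 := fun h => hx (by simpa [toEuc] using h)
      have hnx : 0 < ‖toEuc x‖ := norm_pos_iff.mpr hx'
      have := quad x
      have : 0 < x ⬝ᵥ (A *ᵥ x) := lt_of_lt_of_le (by positivity) this
      simpa using this
  have hdet : IsUnit A.det := isUnit_iff_ne_zero.mpr hApos.det_pos.ne'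
  -- the error identity
  have hid : (Stilde - S).transpose = A⁻¹ * (U.transpose * (W * E)) := by
    have h2 : A⁻¹ * A = 1 := Matrix.nonsing_inv_mul A hdet
    have h3 : A⁻¹ * U.transpose * W * (U * S.transpose) = S.transpose := by
      have : A⁻¹ * U.transpose * W * (U * S.transpose)
          = A⁻¹ * A * S.transpose := by
        rw [hA]; simp only [Matrix.mul_assoc]
      rw [this, h2, Matrix.one_mul]
    rw [Matrix.transpose_sub, hStilde, hY, Matrix.mul_add, h3]
    have h4 : A⁻¹ * U.transpose * W * E = A⁻¹ * (U.transpose * (W * E)) := by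
      simp only [Matrix.mul_assoc]
    rw [h4]
    abel
  -- inverse bound
  have hbndInv : ∀ v : Fin n → ℝ, ‖toEuc (A⁻¹ *ᵥ v)‖ ≤ ‖toEuc v‖ / (wmin * μ ^ 2) := by
    intro v
    set x := A⁻¹ *ᵥ v with hx
    have hAx : A *ᵥ x = v := by
      rw [hx, Matrix.mulVec_mulVec, Matrix.mul_nonsing_inv A hdet, Matrix.one_mulVec]
    have h1 : wmin * μ ^ 2 * ‖toEuc x‖ ^ 2 ≤ ‖toEuc x‖ * ‖toEuc v‖ :=
      calc wmin * μ ^ 2 * ‖toEuc x‖ ^ 2 ≤ x ⬝ᵥ (A *ᵥ x) := quad x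
        _ = x ⬝ᵥ v := by rw [hAx]
        _ ≤ |x ⬝ᵥ v| := le_abs_self _
        _ ≤ ‖toEuc x‖ * ‖toEuc v‖ := abs_dot_le x v
    rcases eq_or_lt_of_le (norm_nonneg (toEuc x)) with h0 | h0
    · rw [← h0]; positivity
    · rw [le_div_iff₀ hc]
      nlinarith [h1, h0]
  -- bound on UᵀWE
  have hM : ∀ x : Fin n → ℝ,
      ‖toEuc ((U.transpose * (W * E)) *ᵥ x)‖ ≤ (τ * umax * emax) * ‖toEuc x‖ := by
    intro x
    have expand : (U.transpose * (W * E)) *ᵥ x = ∑ ℓ, (w ℓ * (E ℓ ⬝ᵥ x)) • U ℓ := by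
      ext i
      rw [Finset.sum_apply]
      simp only [Matrix.mulVec, dotProduct, Matrix.mul_apply, hW,
        Matrix.transpose_apply, Matrix.diagonal_mul, Pi.smul_apply, smul_eq_mul,
        Finset.sum_mul, Finset.mul_sum]
      rw [Finset.sum_comm]
      exact Finset.sum_congr rfl fun ℓ _ => Finset.sum_congr rfl fun j _ => by
        simp [Matrix.diagonal_apply]; ring
    have expand2 : toEuc ((U.transpose * (W * E)) *ᵥ x)
        = ∑ ℓ, (w ℓ * (E ℓ ⬝ᵥ x)) • toEuc (U ℓ) := by
      rw [expand]; simp [toEuc, WithLp.toLp_sum]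
    rw [expand2]
    calc ‖∑ ℓ, (w ℓ * (E ℓ ⬝ᵥ x)) • toEuc (U ℓ)‖
        ≤ ∑ ℓ, ‖(w ℓ * (E ℓ ⬝ᵥ x)) • toEuc (U ℓ)‖ := norm_sum_le _ _
      _ ≤ ∑ _ℓ : Fin τ, umax * (emax * ‖toEuc x‖) := by
          refine Finset.sum_le_sum fun ℓ _ => ?_
          rw [norm_smul, Real.norm_eq_abs, abs_mul]
          have hwℓ : |w ℓ| ≤ 1 := abs_le.mpr ⟨by linarith [(hw ℓ).1, hwmin.le], (hw ℓ).2⟩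
          have hd : |E ℓ ⬝ᵥ x| ≤ emax * ‖toEuc x‖ := by
            calc |E ℓ ⬝ᵥ x| ≤ ‖toEuc (E ℓ)‖ * ‖toEuc x‖ := abs_dot_le _ _
              _ ≤ emax * ‖toEuc x‖ :=
                  mul_le_mul_of_nonneg_right (hE_rows ℓ) (norm_nonneg _)
          have hU : ‖toEuc (U ℓ)‖ ≤ umax := hU_rows ℓ
          have hex : (0:ℝ) ≤ emax * ‖toEuc x‖ := (abs_nonneg _).trans hd
          have hprod : |w ℓ| * |E ℓ ⬝ᵥ x| ≤ 1 * (emax * ‖toEuc x‖) :=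
            mul_le_mul hwℓ hd (abs_nonneg _) zero_le_one
          calc |w ℓ| * |E ℓ ⬝ᵥ x| * ‖toEuc (U ℓ)‖
              ≤ 1 * (emax * ‖toEuc x‖) * umax :=
                mul_le_mul hprod hU (norm_nonneg _) (by simpa using hex)
            _ = umax * (emax * ‖toEuc x‖) := by ring
      _ = (τ * umax * emax) * ‖toEuc x‖ := by
          rw [Finset.sum_const, Finset.card_univ, Fintype.card_fin, nsmul_eq_mul]
          ring
  -- nonnegativity of the constant
  have hnn : (0:ℝ) ≤ τ * umax * emax := by
    rcases Nat.eq_zero_or_pos τ with h | h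
    · simp [h]
    · have h0 : 0 ≤ umax := le_trans (norm_nonneg _) (hU_rows ⟨0, h⟩)
      have h1 : 0 ≤ emax := le_trans (norm_nonneg _) (hE_rows ⟨0, h⟩)
      positivity
  -- assemble
  rw [norm_toEuclideanCLM_transpose, hid]
  refine ContinuousLinearMap.opNorm_le_bound _ (by positivity) fun x => ?_
  have happ : Matrix.toEuclideanCLM (𝕜 := ℝ) (A⁻¹ * (U.transpose * (W * E))) x
      = toEuc (A⁻¹ *ᵥ ((U.transpose * (W * E)) *ᵥ (WithLp.equiv 2 _) x)) := by
    rw [Matrix.mulVec_mulVec]; rfl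
  rw [happ]
  set x' : Fin n → ℝ := (WithLp.equiv 2 _) x with hx'
  have hxe : toEuc x' = x := by simp [toEuc, hx']
  calc ‖toEuc (A⁻¹ *ᵥ ((U.transpose * (W * E)) *ᵥ x'))‖
      ≤ ‖toEuc ((U.transpose * (W * E)) *ᵥ x')‖ / (wmin * μ ^ 2) := hbndInv _
    _ ≤ ((τ * umax * emax) * ‖toEuc x'‖) / (wmin * μ ^ 2) :=
        by gcongr; exact hM x'
    _ = τ * umax * emax / (wmin * μ ^ 2) * ‖x‖ := by rw [hxe]; ring
end

section
/- Let α > 0, r > 0, τ, n positive integers, and λ ∈ (0,1]. Let g : ℝⁿ → ℝⁿ be differentiable on the closed ball B̄(u_k, αr) with derivative Dg Lipschitz with constant L_S there, and set S_k := Dg(u_k). Let u_{k−τ}, u_{k−τ+1}, …, u_k be points of B̄(u_k, αr), and let U, Y ∈ ℝ^{τ×n} be the matrices whose ℓ-th rows are Δu_ℓ := u_ℓ − u_{ℓ−1} and Δy_ℓ := g(u_ℓ) − g(u_{ℓ−1}) for ℓ = k−τ+1, …, k. Let W := diag(λ^{τ−1}, λ^{τ−2}, …, λ, 1), and assume the sufficient-excitation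 bound ‖U x‖ ≥ m r ‖x‖ for all x ∈ ℝⁿ with m > 0. Define S̃_k by S̃_kᵀ := (UᵀWU)^{-1} Uᵀ W Y. Then ‖S̃_k − S_k‖ ≤ (8 τ α³ L_S / (λ^{τ−1} m²)) · r in operator norm; in particular, for every u with ‖u − u_k‖ ≤ r, ‖(S̃_k − S_k)(u − u_k)‖ ≤ (8 τ α³ L_S / (λ^{τ−1} m²)) · r². -/
open scoped Matrix

noncomputable def en {k : ℕ} : (Fin k → ℝ) →ₗ[ℝ] EuclideanSpace ℝ (Fin k) :=
  (WithLp.linearEquiv 2 ℝ (Fin k → ℝ)).symm.toLinearMap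

lemma en_apply {k : ℕ} (v : Fin k → ℝ) (i : Fin k) : en v i = v i := rfl

lemma en_equiv {k : ℕ} (v : Fin k → ℝ) : en v = (WithLp.equiv 2 (Fin k → ℝ)).symm v := rfl

lemma en_norm_sq {k : ℕ} (v : Fin k → ℝ) : ‖en v‖ ^ 2 = v ⬝ᵥ v := by
  rw [EuclideanSpace.norm_eq, Real.sq_sqrt (by positivity)]
  simp [dotProduct, en_apply, Real.norm_eq_abs, sq_abs, pow_two]

lemma en_dot_abs_le {k : ℕ} (v w : Fin k → ℝ) : |v ⬝ᵥ w| ≤ ‖en v‖ * ‖en w‖ := by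
  have h := abs_real_inner_le_norm (en v) (en w)
  have e : inner ℝ (en v) (en w) = v ⬝ᵥ w := by
    rw [EuclideanSpace.inner_eq_star_dotProduct, star_trivial, dotProduct_comm]; rfl
  rwa [e] at h

lemma en_dot_le {k : ℕ} (v w : Fin k → ℝ) : v ⬝ᵥ w ≤ ‖en v‖ * ‖en w‖ :=
  (le_abs_self _).trans (en_dot_abs_le v w)

lemma en_sum_sq {k : ℕ} (v : Fin k → ℝ) : ‖en v‖ ^ 2 = ∑ i, v i ^ 2 := by
  rw [en_norm_sq]; simp [dotProduct, pow_two]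

set_option maxHeartbeats 1600000 in
/-- quantitative form of the paper's Lemma 1: the weighted least-squares
Jacobian estimate `S̃_k` built from `τ` recent trajectory increments sampled inside
`B̄(u_k, αr)`, with forgetting-factor weights `W = diag(λ^{τ−1},…,λ,1)` and the
sufficient-excitation bound `‖Ux‖ ≥ m r ‖x‖`, satisfies
`‖S̃_k − S_k‖ ≤ (8 τ α³ L_S / (λ^{τ−1} m²)) r` in operator norm, where `S_k = Dg(u_k)`;
in particular `‖(S̃_k − S_k)(u − u_k)‖ ≤ (8 τ α³ L_S / (λ^{τ−1} m²)) r²` whenever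
`‖u − u_k‖ ≤ r`. -/
theorem wls_jacobian_estimate_error
    {τ n : ℕ} (hτ : 0 < τ) (hn : 0 < n)
    (α r : ℝ) (hα : 0 < α) (hr : 0 < r)
    (lam : ℝ) (hlam : lam ∈ Set.Ioc (0 : ℝ) 1)
    (g : EuclideanSpace ℝ (Fin n) → EuclideanSpace ℝ (Fin n))
    (Dg : EuclideanSpace ℝ (Fin n) →
      (EuclideanSpace ℝ (Fin n) →L[ℝ] EuclideanSpace ℝ (Fin n)))
    (uk : EuclideanSpace ℝ (Fin n))
    (LS : ℝ)
    (hdiff : ∀ u ∈ Metric.closedBall uk (α * r),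
      HasFDerivWithinAt g (Dg u) (Metric.closedBall uk (α * r)) u)
    (hlip : ∀ u ∈ Metric.closedBall uk (α * r), ∀ u' ∈ Metric.closedBall uk (α * r),
      ‖Dg u - Dg u'‖ ≤ LS * ‖u - u'‖)
    (us : Fin (τ + 1) → EuclideanSpace ℝ (Fin n))
    (hus : ∀ ℓ, us ℓ ∈ Metric.closedBall uk (α * r))
    (hus_last : us (Fin.last τ) = uk)
    (U Y : Matrix (Fin τ) (Fin n) ℝ)
    (hU : ∀ (ℓ : Fin τ) (i : Fin n), U ℓ i = (us ℓ.succ - us ℓ.castSucc) i)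
    (hY : ∀ (ℓ : Fin τ) (i : Fin n), Y ℓ i = (g (us ℓ.succ) - g (us ℓ.castSucc)) i)
    (W : Matrix (Fin τ) (Fin τ) ℝ)
    (hW : W = Matrix.diagonal (fun ℓ : Fin τ => lam ^ (τ - 1 - (ℓ : ℕ))))
    (m : ℝ) (hm : 0 < m)
    (hexc : ∀ x : EuclideanSpace ℝ (Fin n),
      m * r * ‖x‖ ≤ ‖Matrix.toEuclideanLin U x‖)
    (Stilde : Matrix (Fin n) (Fin n) ℝ)
    (hStilde : Stilde.transpose = (U.transpose * W * U)⁻¹ * U.transpose * W * Y) :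
    ‖Matrix.toEuclideanCLM (𝕜 := ℝ) Stilde - Dg uk‖
        ≤ (8 * τ * α ^ 3 * LS / (lam ^ (τ - 1) * m ^ 2)) * r ∧
      ∀ u : EuclideanSpace ℝ (Fin n), ‖u - uk‖ ≤ r →
        ‖(Matrix.toEuclideanCLM (𝕜 := ℝ) Stilde - Dg uk) (u - uk)‖
          ≤ (8 * τ * α ^ 3 * LS / (lam ^ (τ - 1) * m ^ 2)) * r ^ 2 := by
  obtain ⟨hlam0, hlam1⟩ := hlam
  have hαr : 0 < α * r := mul_pos hα hr
  -- LS is nonnegative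
  have hLS : 0 ≤ LS := by
    have h1 : uk ∈ Metric.closedBall uk (α * r) := Metric.mem_closedBall_self hαr.le
    set u' : EuclideanSpace ℝ (Fin n) := uk + (α * r) • EuclideanSpace.single ⟨0, hn⟩ (1 : ℝ)
      with hu'
    have hnorm : ‖u' - uk‖ = α * r := by
      rw [hu']
      simp [norm_smul, EuclideanSpace.norm_single]
      rw [abs_of_pos hα, abs_of_pos hr]
    have h2 : u' ∈ Metric.closedBall uk (α * r) := by
      rw [Metric.mem_closedBall, dist_eq_norm, hnorm]
    have h3 := hlip u' h2 uk h1
    rw [hnorm] at h3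
    nlinarith [norm_nonneg (Dg u' - Dg uk)]
  -- the matrix of `Dg uk`
  set Sk : Matrix (Fin n) (Fin n) ℝ :=
    Matrix.toEuclideanLin.symm (Dg uk : EuclideanSpace ℝ (Fin n) →ₗ[ℝ] EuclideanSpace ℝ (Fin n))
    with hSkdef
  have hSkL : Matrix.toEuclideanLin Sk
      = (Dg uk : EuclideanSpace ℝ (Fin n) →ₗ[ℝ] EuclideanSpace ℝ (Fin n)) :=
    LinearEquiv.apply_symm_apply _ _
  have hSkApp : ∀ x : EuclideanSpace ℝ (Fin n),
      Dg uk x = en (Sk *ᵥ (WithLp.equiv 2 (Fin n → ℝ) x)) := by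
    intro x
    rw [← ContinuousLinearMap.coe_coe (Dg uk), ← hSkL]
    rfl
  -- step bound
  have hstep : ∀ ℓ : Fin τ, ‖us ℓ.succ - us ℓ.castSucc‖ ≤ 2 * (α * r) := by
    intro ℓ
    have h1 := Metric.mem_closedBall.mp (hus ℓ.succ)
    have h2 := Metric.mem_closedBall.mp (hus ℓ.castSucc)
    calc ‖us ℓ.succ - us ℓ.castSucc‖ = dist (us ℓ.succ) (us ℓ.castSucc) := (dist_eq_norm _ _).symm
      _ ≤ dist (us ℓ.succ) uk + dist uk (us ℓ.castSucc) := dist_triangle _ _ _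
      _ = dist (us ℓ.succ) uk + dist (us ℓ.castSucc) uk := by rw [dist_comm uk]
      _ ≤ α * r + α * r := add_le_add h1 h2
      _ = 2 * (α * r) := by ring
  have hUrowEq : ∀ ℓ : Fin τ, en (U ℓ) = us ℓ.succ - us ℓ.castSucc := by
    intro ℓ
    ext i
    simpa [en_apply] using hU ℓ i
  have hUrow : ∀ ℓ : Fin τ, ‖en (U ℓ)‖ ≤ 2 * (α * r) := by
    intro ℓ; rw [hUrowEq ℓ]; exact hstep ℓ
  -- residual matrix rows
  set E : Matrix (Fin τ) (Fin n) ℝ := Y - U * Sk.transpose with hEdef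
  have hErowEq : ∀ ℓ : Fin τ, en (E ℓ) =
      g (us ℓ.succ) - g (us ℓ.castSucc) - Dg uk (us ℓ.succ - us ℓ.castSucc) := by
    intro ℓ
    ext i
    have hDgi : Dg uk (us ℓ.succ - us ℓ.castSucc) i = ∑ j, Sk i j * U ℓ j := by
      rw [hSkApp, en_apply]
      simp only [Matrix.mulVec, dotProduct]
      refine Finset.sum_congr rfl fun j _ => ?_
      rw [hU ℓ j]
      rfl
    have hrhs : (g (us ℓ.succ) - g (us ℓ.castSucc) - Dg uk (us ℓ.succ - us ℓ.castSucc)) i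
        = (g (us ℓ.succ) - g (us ℓ.castSucc)) i - Dg uk (us ℓ.succ - us ℓ.castSucc) i := rfl
    rw [en_apply, hrhs, hDgi, hEdef]
    simp only [Matrix.sub_apply, Matrix.mul_apply, Matrix.transpose_apply, hY ℓ i]
    congr 1
    exact Finset.sum_congr rfl fun j _ => mul_comm _ _
  have hbound : ∀ x ∈ Metric.closedBall uk (α * r), ‖Dg x - Dg uk‖ ≤ LS * (α * r) := by
    intro x hx
    refine (hlip x hx uk (Metric.mem_closedBall_self hαr.le)).trans ?_
    have hd := Metric.mem_closedBall.mp hx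
    rw [← dist_eq_norm]
    exact mul_le_mul_of_nonneg_left hd hLS
  have hErow : ∀ ℓ : Fin τ, ‖en (E ℓ)‖ ≤ (LS * (α * r)) * (2 * (α * r)) := by
    intro ℓ
    rw [hErowEq ℓ]
    have key := (convex_closedBall uk (α * r)).norm_image_sub_le_of_norm_hasFDerivWithin_le'
      hdiff hbound (hus ℓ.castSucc) (hus ℓ.succ)
    exact key.trans (mul_le_mul_of_nonneg_left (hstep ℓ) (mul_nonneg hLS hαr.le))
  -- excitation in coordinates
  have hexc' : ∀ z : Fin n → ℝ, m * r * ‖en z‖ ≤ ‖en (U *ᵥ z)‖ := by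
    intro z
    exact hexc (en z)
  -- quadratic lower bound for M = Uᵀ W U
  set M : Matrix (Fin n) (Fin n) ℝ := U.transpose * W * U with hMdef
  set c : ℝ := lam ^ (τ - 1) * m ^ 2 * r ^ 2 with hcdef
  have hc : 0 < c := by positivity
  have hquad : ∀ z : Fin n → ℝ, c * ‖en z‖ ^ 2 ≤ z ⬝ᵥ (M *ᵥ z) := by
    intro z
    have h1 : z ⬝ᵥ (M *ᵥ z) = (U *ᵥ z) ⬝ᵥ (W *ᵥ (U *ᵥ z)) := by
      rw [hMdef, ← Matrix.mulVec_mulVec, ← Matrix.mulVec_mulVec, Matrix.dotProduct_mulVec,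
        Matrix.vecMul_transpose]
    have h2 : (U *ᵥ z) ⬝ᵥ (W *ᵥ (U *ᵥ z)) = ∑ ℓ : Fin τ, lam ^ (τ - 1 - (ℓ : ℕ)) * ((U *ᵥ z) ℓ) ^ 2 := by
      rw [hW]
      simp only [dotProduct, Matrix.mulVec_diagonal]
      exact Finset.sum_congr rfl fun ℓ _ => by ring
    have h3 : ∀ ℓ : Fin τ, lam ^ (τ - 1) * ((U *ᵥ z) ℓ) ^ 2
        ≤ lam ^ (τ - 1 - (ℓ : ℕ)) * ((U *ᵥ z) ℓ) ^ 2 := fun ℓ =>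
      mul_le_mul_of_nonneg_right (pow_le_pow_of_le_one hlam0.le hlam1 (Nat.sub_le _ _))
        (sq_nonneg _)
    have h4 : lam ^ (τ - 1) * ‖en (U *ᵥ z)‖ ^ 2 ≤ ∑ ℓ : Fin τ, lam ^ (τ - 1 - (ℓ : ℕ)) * ((U *ᵥ z) ℓ) ^ 2 := by
      rw [en_sum_sq, Finset.mul_sum]
      exact Finset.sum_le_sum fun ℓ _ => h3 ℓ
    have h5 : (m * r * ‖en z‖) ^ 2 ≤ ‖en (U *ᵥ z)‖ ^ 2 := by
      have := hexc' z
      have hnn : 0 ≤ m * r * ‖en z‖ := by positivity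
      nlinarith [norm_nonneg (en (U *ᵥ z))]
    rw [h1, h2]
    calc c * ‖en z‖ ^ 2 = lam ^ (τ - 1) * (m * r * ‖en z‖) ^ 2 := by rw [hcdef]; ring
      _ ≤ lam ^ (τ - 1) * ‖en (U *ᵥ z)‖ ^ 2 := by
          exact mul_le_mul_of_nonneg_left h5 (by positivity)
      _ ≤ _ := h4
  -- M is invertible
  have hMunit : IsUnit M := by
    rw [← Matrix.mulVec_injective_iff_isUnit]
    intro a b hab
    have h0 : M *ᵥ (a - b) = 0 := by rw [Matrix.mulVec_sub, hab, sub_self]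
    have h1 := hquad (a - b)
    rw [h0, dotProduct_zero] at h1
    have h2 : ‖en (a - b)‖ ^ 2 ≤ 0 := by
      have hcz : c * 0 = 0 := by ring
      exact (mul_le_mul_iff_right₀ hc).mp (by linarith)
    have h2' : ‖en (a - b)‖ = 0 := by
      have := sq_nonneg ‖en (a - b)‖
      have hs : ‖en (a - b)‖ ^ 2 = 0 := le_antisymm h2 this
      exact pow_eq_zero_iff two_ne_zero |>.mp hs
    have h3 : en (a - b) = 0 := norm_eq_zero.mp h2'
    have h4 : a - b = 0 := by
      have := congrArg (WithLp.equiv 2 (Fin n → ℝ)) h3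
      simpa [en_equiv] using this
    exact sub_eq_zero.mp h4
  have hMdet : IsUnit M.det := (Matrix.isUnit_iff_isUnit_det M).mp hMunit
  have hMinvM : M⁻¹ * M = 1 := Matrix.nonsing_inv_mul M hMdet
  have hMMinv : M * M⁻¹ = 1 := Matrix.mul_nonsing_inv M hMdet
  have hMinv_bound : ∀ w : Fin n → ℝ, ‖en (M⁻¹ *ᵥ w)‖ ≤ c⁻¹ * ‖en w‖ := by
    intro w
    set z := M⁻¹ *ᵥ w with hzdef
    have hMzw : M *ᵥ z = w := by rw [hzdef, Matrix.mulVec_mulVec, hMMinv, Matrix.one_mulVec]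
    have h1 : c * ‖en z‖ ^ 2 ≤ z ⬝ᵥ w := by rw [← hMzw]; exact hquad z
    have h2 : z ⬝ᵥ w ≤ ‖en z‖ * ‖en w‖ := en_dot_le z w
    rcases (norm_nonneg (en z)).eq_or_lt with h | h
    · rw [← h]; positivity
    · have h3 : c * ‖en z‖ ≤ ‖en w‖ := by nlinarith
      calc ‖en z‖ = c⁻¹ * (c * ‖en z‖) := by field_simp
        _ ≤ c⁻¹ * ‖en w‖ := mul_le_mul_of_nonneg_left h3 (inv_nonneg.mpr hc.le)
  -- bound on `Uᵀ W E`
  have hUWE : ∀ v : Fin n → ℝ, ‖en ((U.transpose * W * E) *ᵥ v)‖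
      ≤ (τ : ℝ) * ((2 * (α * r)) * ((LS * (α * r)) * (2 * (α * r)) * ‖en v‖)) := by
    intro v
    have h1 : (U.transpose * W * E) *ᵥ v = U.transpose *ᵥ (W *ᵥ (E *ᵥ v)) := by
      rw [← Matrix.mulVec_mulVec, ← Matrix.mulVec_mulVec]
    set y := W *ᵥ (E *ᵥ v) with hydef
    have h2 : U.transpose *ᵥ y = ∑ ℓ : Fin τ, y ℓ • U ℓ := by
      funext i
      simp [Matrix.mulVec, dotProduct, Matrix.transpose_apply, Finset.sum_apply,
        mul_comm]
    have hy : ∀ ℓ : Fin τ, |y ℓ| ≤ (LS * (α * r)) * (2 * (α * r)) * ‖en v‖ := by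
      intro ℓ
      have hyl : y ℓ = lam ^ (τ - 1 - (ℓ : ℕ)) * (E ℓ ⬝ᵥ v) := by
        rw [hydef, hW]
        rw [Matrix.mulVec_diagonal]
        rfl
      rw [hyl, abs_mul]
      have hd1 : |lam ^ (τ - 1 - (ℓ : ℕ))| ≤ 1 := by
        rw [abs_of_pos (by positivity)]
        exact pow_le_one₀ hlam0.le hlam1
      have hEv : |E ℓ ⬝ᵥ v| ≤ (LS * (α * r)) * (2 * (α * r)) * ‖en v‖ :=
        (en_dot_abs_le (E ℓ) v).trans (mul_le_mul_of_nonneg_right (hErow ℓ) (norm_nonneg _))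
      calc |lam ^ (τ - 1 - (ℓ : ℕ))| * |E ℓ ⬝ᵥ v|
          ≤ 1 * ((LS * (α * r)) * (2 * (α * r)) * ‖en v‖) :=
            mul_le_mul hd1 hEv (abs_nonneg _) zero_le_one
        _ = (LS * (α * r)) * (2 * (α * r)) * ‖en v‖ := one_mul _
    rw [h1, h2, map_sum]
    refine (norm_sum_le _ _).trans ?_
    have hEb : (0:ℝ) ≤ (LS * (α * r)) * (2 * (α * r)) * ‖en v‖ :=
      mul_nonneg (mul_nonneg (mul_nonneg hLS hαr.le) (by positivity)) (norm_nonneg _)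
    have hterm : ∀ ℓ : Fin τ, ‖en (y ℓ • U ℓ)‖
        ≤ (2 * (α * r)) * ((LS * (α * r)) * (2 * (α * r)) * ‖en v‖) := by
      intro ℓ
      rw [map_smul, norm_smul, Real.norm_eq_abs]
      calc |y ℓ| * ‖en (U ℓ)‖
          ≤ ((LS * (α * r)) * (2 * (α * r)) * ‖en v‖) * (2 * (α * r)) :=
            mul_le_mul (hy ℓ) (hUrow ℓ) (norm_nonneg _) hEb
        _ = (2 * (α * r)) * ((LS * (α * r)) * (2 * (α * r)) * ‖en v‖) := by ring
    refine (Finset.sum_le_sum fun ℓ _ => hterm ℓ).trans ?_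
    rw [Finset.sum_const, Finset.card_univ, Fintype.card_fin, nsmul_eq_mul]
  -- transpose identity
  have hAT : (Stilde - Sk).transpose = M⁻¹ * (U.transpose * W * E) := by
    have hexp : U.transpose * W * E = U.transpose * W * Y - M * Sk.transpose := by
      rw [hEdef, Matrix.mul_sub, hMdef, Matrix.mul_assoc (U.transpose * W) U Sk.transpose]
    rw [Matrix.transpose_sub, hStilde, hexp, Matrix.mul_sub]
    congr 1
    · simp only [Matrix.mul_assoc]
    · rw [← Matrix.mul_assoc, hMinvM, Matrix.one_mul]
  set K : ℝ := c⁻¹ * ((τ : ℝ) * ((2 * (α * r)) * ((LS * (α * r)) * (2 * (α * r))))) with hKdef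
  have hK0 : 0 ≤ K := by
    have hnn : (0:ℝ) ≤ LS * (α * r) := mul_nonneg hLS hαr.le
    exact mul_nonneg (inv_nonneg.mpr hc.le) (mul_nonneg (Nat.cast_nonneg τ)
      (mul_nonneg (by positivity) (mul_nonneg hnn (by positivity))))
  have hATv : ∀ w : Fin n → ℝ, ‖en ((Stilde - Sk).transpose *ᵥ w)‖ ≤ K * ‖en w‖ := by
    intro w
    rw [hAT, ← Matrix.mulVec_mulVec]
    refine (hMinv_bound _).trans ?_
    refine (mul_le_mul_of_nonneg_left (hUWE w) (inv_nonneg.mpr hc.le)).trans ?_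
    rw [hKdef]
    exact le_of_eq (by ring)
  have hAv : ∀ x : Fin n → ℝ, ‖en ((Stilde - Sk) *ᵥ x)‖ ≤ K * ‖en x‖ := by
    intro x
    set yv := (Stilde - Sk) *ᵥ x with hyv
    have h1 : ‖en yv‖ ^ 2 = yv ⬝ᵥ ((Stilde - Sk) *ᵥ x) := by rw [en_norm_sq, hyv]
    have h2 : yv ⬝ᵥ ((Stilde - Sk) *ᵥ x) = ((Stilde - Sk).transpose *ᵥ yv) ⬝ᵥ x := by
      rw [Matrix.dotProduct_mulVec, ← Matrix.mulVec_transpose]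
    have h3 := en_dot_le ((Stilde - Sk).transpose *ᵥ yv) x
    have h4 := hATv yv
    rcases (norm_nonneg (en yv)).eq_or_lt with h | h
    · rw [← h]; exact mul_nonneg hK0 (norm_nonneg _)
    · have h5 : ‖en yv‖ ^ 2 ≤ K * ‖en yv‖ * ‖en x‖ := by
        calc ‖en yv‖ ^ 2 = yv ⬝ᵥ ((Stilde - Sk) *ᵥ x) := h1
          _ = ((Stilde - Sk).transpose *ᵥ yv) ⬝ᵥ x := h2
          _ ≤ ‖en ((Stilde - Sk).transpose *ᵥ yv)‖ * ‖en x‖ := h3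
          _ ≤ K * ‖en yv‖ * ‖en x‖ := mul_le_mul_of_nonneg_right h4 (norm_nonneg _)
      have h6 : ‖en yv‖ * ‖en yv‖ ≤ (K * ‖en x‖) * ‖en yv‖ := by
        calc ‖en yv‖ * ‖en yv‖ = ‖en yv‖ ^ 2 := (sq ‖en yv‖).symm
          _ ≤ K * ‖en yv‖ * ‖en x‖ := h5
          _ = (K * ‖en x‖) * ‖en yv‖ := by ring
      exact le_of_mul_le_mul_right h6 h
  have hTapp : ∀ x : EuclideanSpace ℝ (Fin n),
      (Matrix.toEuclideanCLM (𝕜 := ℝ) Stilde - Dg uk) x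
        = en ((Stilde - Sk) *ᵥ (WithLp.equiv 2 (Fin n → ℝ) x)) := by
    intro x
    have hS : Matrix.toEuclideanCLM (𝕜 := ℝ) Stilde x
        = en (Stilde *ᵥ (WithLp.equiv 2 (Fin n → ℝ) x)) := by
      rfl
    rw [ContinuousLinearMap.sub_apply, hS, hSkApp x, Matrix.sub_mulVec, map_sub]
  have hnormx : ∀ x : EuclideanSpace ℝ (Fin n),
      ‖en (WithLp.equiv 2 (Fin n → ℝ) x)‖ = ‖x‖ := by
    intro x
    rw [en_equiv, (WithLp.equiv 2 (Fin n → ℝ)).symm_apply_apply]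
  have hop : ‖Matrix.toEuclideanCLM (𝕜 := ℝ) Stilde - Dg uk‖ ≤ K := by
    refine ContinuousLinearMap.opNorm_le_bound _ hK0 fun x => ?_
    rw [hTapp x]
    calc ‖en ((Stilde - Sk) *ᵥ (WithLp.equiv 2 (Fin n → ℝ) x))‖
        ≤ K * ‖en (WithLp.equiv 2 (Fin n → ℝ) x)‖ := hAv _
      _ = K * ‖x‖ := by rw [hnormx]
  have htau : (0:ℝ) < (τ : ℝ) := by exact_mod_cast hτ
  have hKle : K ≤ (8 * τ * α ^ 3 * LS / (lam ^ (τ - 1) * m ^ 2)) * r := by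
    have hKeq : K = 4 * τ * α ^ 3 * LS * r / (lam ^ (τ - 1) * m ^ 2) := by
      rw [hKdef, hcdef]
      field_simp
      ring
    rw [hKeq, div_mul_eq_mul_div]
    have hnum : 4 * (τ:ℝ) * α ^ 3 * LS * r ≤ 8 * (τ:ℝ) * α ^ 3 * LS * r := by
      nlinarith [mul_nonneg (mul_nonneg (mul_nonneg htau.le (pow_nonneg hα.le 3)) hLS) hr.le]
    exact div_le_div_of_nonneg_right hnum (by positivity) |>.trans_eq rfl
  refine ⟨hop.trans hKle, fun u hu => ?_⟩
  have h1 := (Matrix.toEuclideanCLM (𝕜 := ℝ) Stilde - Dg uk).le_opNorm (u - uk)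
  have h2 : ‖Matrix.toEuclideanCLM (𝕜 := ℝ) Stilde - Dg uk‖
      ≤ (8 * τ * α ^ 3 * LS / (lam ^ (τ - 1) * m ^ 2)) * r := hop.trans hKle
  calc ‖(Matrix.toEuclideanCLM (𝕜 := ℝ) Stilde - Dg uk) (u - uk)‖
      ≤ ‖Matrix.toEuclideanCLM (𝕜 := ℝ) Stilde - Dg uk‖ * ‖u - uk‖ := h1
    _ ≤ ((8 * τ * α ^ 3 * LS / (lam ^ (τ - 1) * m ^ 2)) * r) * r :=
        mul_le_mul h2 hu (norm_nonneg _) (hK0.trans hKle)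
    _ = (8 * τ * α ^ 3 * LS / (lam ^ (τ - 1) * m ^ 2)) * r ^ 2 := by ring
end

section
/- Let J : ℝᵐ → ℝ, let z ∈ ℝᵐ, let r > 0, κ > 0, ε ≥ 0, and let s ∈ ℝᵐ be a unit vector such that J(z + r s) ≤ J(z) − (κ/2) r. Let L̃ : ℝᵐ → ℝ satisfy |J(z + d) − L̃(d)| ≤ ε for every d with ‖d‖ ≤ r, and let d* be a minimizer of L̃ over the closed ball {d : ‖d‖ ≤ r}. Then: (i) the predicted decrease satisfies J(z) − L̃(d*) ≥ (κ/2) r − ε; (ii) the actual decrease satisfies J(z) − J(z + d*) ≥ (κ/2) r − 2ε; and (iii) if ε < (κ/2) r, then the ratio of actual to predicted decrease satisfies (J(z) − J(z + d*)) / (J(z) − L̃(d*)) ≥ 1 − ε/((κ/2) r − ε). -/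
/-- quantitative core of the paper's Lemma 5: let `s` be a unit descent
direction with `J(z + rs) ≤ J(z) − (κ/2)r`, let the surrogate `L̃` be `ε`-accurate on the
trust region `{d : ‖d‖ ≤ r}`, and let `d*` minimize `L̃` there. Then
(i) the predicted decrease satisfies `J(z) − L̃(d*) ≥ (κ/2)r − ε`;
(ii) the actual decrease satisfies `J(z) − J(z + d*) ≥ (κ/2)r − 2ε`;
(iii) if `ε < (κ/2)r`, then `(J(z) − J(z+d*))/(J(z) − L̃(d*)) ≥ 1 − ε/((κ/2)r − ε)`. -/
theorem trust_region_decrease_ratio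
    {m : ℕ}
    (J Ltilde : EuclideanSpace ℝ (Fin m) → ℝ)
    (z s : EuclideanSpace ℝ (Fin m))
    (r κ ε : ℝ) (hr : 0 < r) (hκ : 0 < κ) (hε : 0 ≤ ε)
    (hs : ‖s‖ = 1)
    (hdescent : J (z + r • s) ≤ J z - (κ / 2) * r)
    (hsurr : ∀ d : EuclideanSpace ℝ (Fin m), ‖d‖ ≤ r → |J (z + d) - Ltilde d| ≤ ε)
    (dstar : EuclideanSpace ℝ (Fin m))
    (hdstar_mem : ‖dstar‖ ≤ r)
    (hdstar_min : ∀ d : EuclideanSpace ℝ (Fin m), ‖d‖ ≤ r → Ltilde dstar ≤ Ltilde d) :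
    (κ / 2) * r - ε ≤ J z - Ltilde dstar ∧
      (κ / 2) * r - 2 * ε ≤ J z - J (z + dstar) ∧
      (ε < (κ / 2) * r →
        1 - ε / ((κ / 2) * r - ε) ≤ (J z - J (z + dstar)) / (J z - Ltilde dstar)) := by
  have hrs : ‖(r : ℝ) • s‖ ≤ r := by
    rw [norm_smul, hs]; simp [abs_of_pos hr]
  have h1 := hsurr (r • s) hrs
  have h2 := hsurr dstar hdstar_mem
  have hmin := hdstar_min (r • s) hrs
  rw [abs_le] at h1 h2
  have hi : (κ / 2) * r - ε ≤ J z - Ltilde dstar := by linarith [h1.1, h1.2]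
  have hii : (κ / 2) * r - 2 * ε ≤ J z - J (z + dstar) := by linarith [h2.1, h2.2]
  refine ⟨hi, hii, fun hlt => ?_⟩
  set P := J z - Ltilde dstar with hP
  set A := J z - J (z + dstar) with hA
  have hPpos : 0 < P := by linarith
  have hAP : P - ε ≤ A := by linarith [h2.1, h2.2]
  have h3 : 1 - ε / P ≤ A / P := by
    have heq : (1 - ε / P) = (P - ε) / P := by field_simp
    rw [heq]
    gcongr
  have h4 : 1 - ε / ((κ / 2) * r - ε) ≤ 1 - ε / P := by
    have : ε / P ≤ ε / ((κ / 2) * r - ε) :=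
      div_le_div_of_nonneg_left hε (by linarith) hi
    linarith
  linarith
end
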